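/- Let d be a positive integer and t a non-negative integer. If S is a set of d + t + 2 points in ℝ^d and T_2(S) has covering dimension at most 0, then S admits a Tverberg (2+t)-partition, i.e., T_{2+t}(S) is non-empty. -/

import Mathlib

/-- The Tverberg set `T_r(S)` of a finite point set `S`: points `p` admitting a
partition of `S` into `r` pairwise disjoint parts whose convex hulls all contain `p`. -/
def TverSet {E : Type*} [AddCommGroup E] [Module ℝ E] (r : ℕ) (S : Finset E) : Set E :=
  {p | ∃ A : Fin r → Finset E,
    (∀ i j, i ≠ j → Disjoint (A i) (A j)) ∧
    (⋃ i, (A i : Set E)) = (S : Set E) ∧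
    ∀ i, p ∈ convexHull ℝ (A i : Set E)}

/-- `X` has covering dimension at most `k`: every finite open cover admits a finite
open refinement in which any `k + 2` distinct members have empty intersection. -/
def CovDimLE (X : Type*) [TopologicalSpace X] (k : ℕ) : Prop :=
  ∀ 𝒰 : Finset (Set X), (∀ U ∈ 𝒰, IsOpen U) → ⋃₀ (𝒰 : Set (Set X)) = Set.univ →
    ∃ 𝒱 : Finset (Set X), (∀ V ∈ 𝒱, IsOpen V) ∧ ⋃₀ (𝒱 : Set (Set X)) = Set.univ ∧
      (∀ V ∈ 𝒱, ∃ U ∈ 𝒰, V ⊆ U) ∧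
      ∀ 𝒮 : Finset (Set X), 𝒮 ⊆ 𝒱 → k + 2 ≤ 𝒮.card → ⋂₀ (𝒮 : Set (Set X)) = ∅

/-!
Let `D` be the space of affine dependencies of `S`; it has dimension at least `t + 1`. A nonzero
`μ ∈ D` has a Radon point, the barycentre of the points weighted by `μ⁺`, which lies in `T₂(S)`
and depends continuously on `μ`; for `t = 0` this is the answer. A T1 space of covering
dimension `0` is totally separated, while `D \ {0}` is connected as soon as `t ≥ 1`, so the Radon
point is then a constant `p`.
Hence the piecewise-linear map `μ ↦ ∑ μᵢ⁺ (xᵢ - p)` vanishes on `D`. Its kink along the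
hyperplane where one coordinate functional of `D` vanishes shows that for every class of mutually
proportional coordinate functionals `μ ↦ cᵢ μ_{i₀}` the sum `∑ |cᵢ| (xᵢ - p)` over the class
vanishes. Pick `t` coordinates with linearly independent functionals and a nonzero `μ ∈ D`
vanishing at them: `μ⁺`, `μ⁻` and the `t` classes are `t + 2` disjointly supported nonnegative
weightings balanced at `p`, i.e. a Tverberg partition with point `p`.
-/

open Finset Module Topology

section Weights

variable {ι κ E : Type*} [Fintype ι] [AddCommGroup E] [Module ℝ E]

/-- With `v i = xᵢ - p`, these are the barycentric weights of the parts of a Tverberg partition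
with point `p`. -/
structure IsTverbergWeights (v : ι → E) (w : κ → ι → ℝ) : Prop where
  nonneg : ∀ j i, 0 ≤ w j i
  sum_smul_eq_zero : ∀ j, ∑ i, w j i • v i = 0
  ne_zero : ∀ j, w j ≠ 0
  disjoint : Pairwise fun j j' => ∀ i, w j i = 0 ∨ w j' i = 0

namespace IsTverbergWeights

variable {v : ι → E} {w : κ → ι → ℝ}

lemma comp {κ' : Type*} (hw : IsTverbergWeights v w) {e : κ' → κ} (he : Function.Injective e) :
    IsTverbergWeights v (w ∘ e) where
  nonneg j := hw.nonneg (e j)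
  sum_smul_eq_zero j := hw.sum_smul_eq_zero (e j)
  ne_zero j := hw.ne_zero (e j)
  disjoint _ _ h := hw.disjoint (he.ne h)

lemma sum_elim {κ' : Type*} {w' : κ' → ι → ℝ} (hw : IsTverbergWeights v w)
    (hw' : IsTverbergWeights v w') (h : ∀ j j' i, w j i = 0 ∨ w' j' i = 0) :
    IsTverbergWeights v (Sum.elim w w') where
  nonneg := by rintro (j | j) <;> simp [hw.nonneg, hw'.nonneg]
  sum_smul_eq_zero := by rintro (j | j) <;> simp [hw.sum_smul_eq_zero, hw'.sum_smul_eq_zero]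
  ne_zero := by rintro (j | j) <;> simp [hw.ne_zero, hw'.ne_zero]
  disjoint := by
    rintro (j | j) (j' | j') hne i
    · exact hw.disjoint (fun h => hne (congrArg _ h)) i
    · exact h j j' i
    · exact (h j' j i).symm
    · exact hw'.disjoint (fun h => hne (congrArg _ h)) i

end IsTverbergWeights

lemma sum_posPart_pos {μ : ι → ℝ} (hμ : μ ≠ 0) (hsum : ∑ i, μ i = 0) : 0 < ∑ i, μ⁺ i := by
  obtain ⟨i, -, hi⟩ := exists_pos_of_sum_zero_of_exists_nonzero μ hsum
    (by simpa [funext_iff] using hμ)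
  exact sum_pos' (fun i _ => posPart_nonneg _) ⟨i, mem_univ i, posPart_pos hi⟩

lemma posPart_ne_zero_of_sum_eq_zero {μ : ι → ℝ} (hμ : μ ≠ 0) (hsum : ∑ i, μ i = 0) :
    μ⁺ ≠ 0 := fun h => (sum_posPart_pos hμ hsum).ne' (by rw [h]; simp)

lemma isTverbergWeights_posPart_negPart {v : ι → E} {μ : ι → ℝ} (hμ : μ ≠ 0)
    (hsum : ∑ i, μ i = 0) (hpos : ∑ i, μ⁺ i • v i = 0) (hneg : ∑ i, μ⁻ i • v i = 0) :
    IsTverbergWeights v ![μ⁺, μ⁻] where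
  nonneg j i := by fin_cases j <;> simp
  sum_smul_eq_zero j := by fin_cases j <;> assumption
  ne_zero j := by
    fin_cases j
    · exact posPart_ne_zero_of_sum_eq_zero hμ hsum
    · rw [← posPart_neg]
      exact posPart_ne_zero_of_sum_eq_zero (neg_ne_zero.2 hμ) (by simp [hsum])
  disjoint j j' h i := by
    rcases le_total (μ i) 0 with hi | hi <;> fin_cases j <;> fin_cases j' <;> simp_all

lemma mem_convexHull_of_sum_smul_sub_eq_zero {x : ι → E} {p : E} {w : ι → ℝ} {s : Set ι}
    (hw₀ : ∀ i, 0 ≤ w i) (hw : w ≠ 0) (hs : ∀ i, w i ≠ 0 → i ∈ s)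
    (h : ∑ i, w i • (x i - p) = 0) : p ∈ convexHull ℝ (x '' s) := by
  classical
  have hpos : 0 < ∑ i, w i := by
    obtain ⟨i, hi⟩ := Function.ne_iff.mp hw
    exact sum_pos' (fun i _ => hw₀ i) ⟨i, mem_univ i, (hw₀ i).lt_of_ne' hi⟩
  have hp : univ.centerMass w x = p := by
    simp only [smul_sub, sum_sub_distrib, ← sum_smul, sub_eq_zero] at h
    rw [centerMass, h, smul_smul, inv_mul_cancel₀ hpos.ne', one_smul]
  rw [← hp, ← centerMass_filter_ne_zero]
  exact centerMass_mem_convexHull _ (fun i _ => hw₀ i) (by rwa [sum_filter_ne_zero])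
    fun i hi => Set.mem_image_of_mem x (hs i (mem_filter.mp hi).2)

lemma mem_tverSet_of_isTverbergWeights {r : ℕ} (hr : 0 < r) {S : Finset E} {p : E}
    {w : Fin r → S → ℝ} (hw : IsTverbergWeights (fun x : S => (x : E) - p) w) :
    p ∈ TverSet r S := by
  classical
  let part (x : S) : Fin r := if h : ∃ j, w j x ≠ 0 then h.choose else ⟨0, hr⟩
  have hpart (j : Fin r) (x : S) (hx : w j x ≠ 0) : part x = j := by
    have h : ∃ j, w j x ≠ 0 := ⟨j, hx⟩
    simp only [part, dif_pos h]
    by_contra hne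
    exact (hw.disjoint hne x).elim h.choose_spec hx
  refine ⟨fun j => ({x | part x = j} : Finset S).map (Function.Embedding.subtype _), ?_, ?_, ?_⟩
  · intro j j' hne
    simp only [disjoint_left, mem_map, mem_filter, mem_univ, true_and,
      Function.Embedding.subtype_apply]
    rintro _ ⟨x, rfl, rfl⟩ ⟨y, hy, hxy⟩
    exact hne (Subtype.ext hxy ▸ hy)
  · ext y
    simp only [Set.mem_iUnion, coe_map, coe_filter, mem_univ, true_and,
      Function.Embedding.subtype_apply, Set.mem_image, Set.mem_ofPred_eq, mem_coe]
    exact ⟨fun ⟨_, x, _, hx⟩ => hx ▸ x.2, fun hy => ⟨_, ⟨y, hy⟩, rfl, rfl⟩⟩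
  · intro j
    rw [coe_map, coe_filter]
    exact mem_convexHull_of_sum_smul_sub_eq_zero (hw.nonneg j) (hw.ne_zero j)
      (fun x hx => by simpa using hpart j x hx) (hw.sum_smul_eq_zero j)

end Weights

lemma isClopen_of_mem_of_pairwiseDisjoint {X : Type*} [TopologicalSpace X] {𝒱 : Set (Set X)}
    (hopen : ∀ V ∈ 𝒱, IsOpen V) (hcover : ⋃₀ 𝒱 = Set.univ) (hdisj : 𝒱.PairwiseDisjoint id)
    {V : Set X} (hV : V ∈ 𝒱) : IsClopen V := by
  refine ⟨⟨?_⟩, hopen V hV⟩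
  have : Vᶜ = ⋃₀ (𝒱 \ {V}) := by
    ext x
    have hx : x ∈ ⋃₀ 𝒱 := hcover ▸ trivial
    simp only [Set.mem_compl_iff, Set.mem_sUnion, Set.mem_sdiff, Set.mem_singleton_iff] at hx ⊢
    obtain ⟨W, hW, hxW⟩ := hx
    refine ⟨fun hxV => ⟨W, ⟨hW, fun h => hxV (h ▸ hxW)⟩, hxW⟩, ?_⟩
    rintro ⟨W', ⟨hW', hne⟩, hxW'⟩ hxV
    exact Set.disjoint_left.mp (hdisj hW' hV hne) hxW' hxV
  rw [this]
  exact isOpen_sUnion fun W hW => hopen W hW.1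

lemma CovDimLE.totallySeparatedSpace {X : Type*} [TopologicalSpace X] [T1Space X]
    (h : CovDimLE X 0) : TotallySeparatedSpace X := by
  classical
  refine totallySeparatedSpace_iff_exists_isClopen.mpr fun a b hab => ?_
  obtain ⟨𝒱, hopen, hcover, hrefine, hinter⟩ := h {{b}ᶜ, {a}ᶜ}
    (by simp)
    (by ext x; by_cases x = a <;> simp_all)
  have hdisj : (𝒱 : Set (Set X)).PairwiseDisjoint id := by
    intro V hV W hW hne
    rw [Function.onFun, id, id, Set.disjoint_iff_inter_eq_empty]
    simpa using hinter {V, W} (by simp_all [insert_subset_iff]) (by simp [card_pair hne])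
  obtain ⟨V, hV, haV⟩ : a ∈ ⋃₀ (𝒱 : Set (Set X)) := hcover ▸ trivial
  obtain ⟨U, hU, hVU⟩ := hrefine V hV
  have hbV : b ∉ V := by
    simp only [mem_insert, mem_singleton] at hU
    rcases hU with rfl | rfl
    · exact fun hb => hVU hb rfl
    · exact absurd (hVU haV) (by simp)
  exact ⟨V, isClopen_of_mem_of_pairwiseDisjoint hopen hcover hdisj hV, haV, hbV⟩

section Radon

variable {ι E : Type*} [Fintype ι] [AddCommGroup E] [Module ℝ E]

def affineDependencies (x : ι → E) : Submodule ℝ (ι → ℝ) :=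
  LinearMap.ker
    ((Fintype.linearCombination ℝ x).prod (Fintype.linearCombination ℝ fun _ => (1 : ℝ)))

lemma mem_affineDependencies {x : ι → E} {μ : ι → ℝ} :
    μ ∈ affineDependencies x ↔ ∑ i, μ i • x i = 0 ∧ ∑ i, μ i = 0 := by
  simp [affineDependencies, Fintype.linearCombination_apply]

lemma card_le_finrank_add_finrank_affineDependencies [FiniteDimensional ℝ E] (x : ι → E) :
    Fintype.card ι ≤ finrank ℝ E + 1 + finrank ℝ (affineDependencies x) := by
  rw [affineDependencies]
  set f := (Fintype.linearCombination ℝ x).prod (Fintype.linearCombination ℝ fun _ => (1 : ℝ))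
  have h := f.finrank_range_add_finrank_ker
  have hrange := (LinearMap.range f).finrank_le
  simp only [finrank_prod, finrank_self, finrank_fintype_fun_eq_card] at h hrange
  omega

noncomputable def radonPoint (x : ι → E) (μ : ι → ℝ) : E :=
  (∑ i, μ⁺ i)⁻¹ • ∑ i, μ⁺ i • x i

lemma sum_posPart_smul_sub_radonPoint {x : ι → E} {μ : ι → ℝ} (hμ : ∑ i, μ⁺ i ≠ 0) :
    ∑ i, μ⁺ i • (x i - radonPoint x μ) = 0 := by
  simp only [smul_sub, sum_sub_distrib, ← sum_smul]
  rw [radonPoint, smul_smul, mul_inv_cancel₀ hμ, one_smul, sub_self]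

lemma sum_negPart_smul_sub_radonPoint {x : ι → E} {μ : ι → ℝ} (hμ : μ ∈ affineDependencies x)
    (hμ0 : μ ≠ 0) : ∑ i, μ⁻ i • (x i - radonPoint x μ) = 0 := by
  obtain ⟨hx, hsum⟩ := mem_affineDependencies.mp hμ
  have hpos := sum_posPart_smul_sub_radonPoint (x := x) (sum_posPart_pos hμ0 hsum).ne'
  have hdep : ∑ i, μ i • (x i - radonPoint x μ) = 0 := by
    simp only [smul_sub, sum_sub_distrib, ← sum_smul, hx, hsum, zero_smul, sub_zero]
  have hnegPart : μ⁻ = μ⁺ - μ := by linear_combination -(posPart_sub_negPart μ)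
  simp only [hnegPart, Pi.sub_apply, sub_smul, sum_sub_distrib, hpos, hdep, sub_zero]

lemma radonPoint_mem_tverSet_two {S : Finset E} {μ : S → ℝ}
    (hμ : μ ∈ affineDependencies ((↑) : S → E)) (hμ0 : μ ≠ 0) :
    radonPoint (↑) μ ∈ TverSet 2 S := by
  have hsum := (mem_affineDependencies.mp hμ).2
  exact mem_tverSet_of_isTverbergWeights two_pos <| isTverbergWeights_posPart_negPart hμ0 hsum
    (sum_posPart_smul_sub_radonPoint (sum_posPart_pos hμ0 hsum).ne')
    (sum_negPart_smul_sub_radonPoint hμ hμ0)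

lemma continuousOn_radonPoint [TopologicalSpace E] [IsTopologicalAddGroup E]
    [ContinuousSMul ℝ E] (x : ι → E) : ContinuousOn (radonPoint x) {μ | ∑ i, μ⁺ i ≠ 0} := by
  have hpos (i : ι) : Continuous fun μ : ι → ℝ => μ⁺ i := (continuous_apply i).max continuous_const
  refine ContinuousOn.smul (ContinuousOn.inv₀ ?_ fun μ hμ => hμ) ?_ <;>
    refine Continuous.continuousOn (continuous_finsetSum _ fun i _ => ?_)
  exacts [hpos i, (hpos i).smul continuous_const]

lemma radonPoint_eq_of_covDimLE [TopologicalSpace E] [IsTopologicalAddGroup E]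
    [ContinuousSMul ℝ E] [T1Space E] {S : Finset E} (hdim : CovDimLE (TverSet 2 S) 0)
    (hD : 1 < finrank ℝ (affineDependencies ((↑) : S → E))) {μ ν : S → ℝ}
    (hμ : μ ∈ affineDependencies ((↑) : S → E)) (hμ0 : μ ≠ 0)
    (hν : ν ∈ affineDependencies ((↑) : S → E)) (hν0 : ν ≠ 0) :
    radonPoint ((↑) : S → E) μ = radonPoint (↑) ν := by
  set D := affineDependencies ((↑) : S → E)
  have := hdim.totallySeparatedSpace
  let nonzeroDeps : Set (S → ℝ) := (↑) '' ({0}ᶜ : Set D)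
  have hconn : IsPreconnected nonzeroDeps :=
    (isConnected_compl_singleton_of_one_lt_rank (by rwa [← finrank_eq_rank, Nat.one_lt_cast]) _
      ).isPreconnected.image _ continuous_subtype_val.continuousOn
  have hsub : nonzeroDeps ⊆ {μ | ∑ i, μ⁺ i ≠ 0} := by
    rintro _ ⟨μ, hμ0, rfl⟩
    exact (sum_posPart_pos (by simpa using hμ0) (mem_affineDependencies.mp μ.2).2).ne'
  have himage : radonPoint (↑) '' nonzeroDeps ⊆ TverSet 2 S := by
    rintro _ ⟨_, ⟨μ, hμ0, rfl⟩, rfl⟩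
    exact radonPoint_mem_tverSet_two μ.2 (by simpa using hμ0)
  refine (totallyDisconnectedSpace_subtype_iff.mp inferInstance) _ himage
    (hconn.image _ ((continuousOn_radonPoint _).mono hsub)) ⟨μ, ?_, rfl⟩ ⟨ν, ?_, rfl⟩
  exacts [⟨⟨μ, hμ⟩, by simpa using hμ0, rfl⟩, ⟨⟨ν, hν⟩, by simpa using hν0, rfl⟩]

end Radon

lemma exists_linearIndependent_comp_of_le_finrank {K M ι : Type*} [DivisionRing K]
    [AddCommGroup M] [Module K M] [Finite ι] (f : ι → M) {t : ℕ}
    (ht : t ≤ finrank K (Submodule.span K (Set.range f))) :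
    ∃ a : Fin t → ι, LinearIndependent K (f ∘ a) := by
  obtain ⟨κ, b, hb, hspan, hli⟩ := exists_linearIndependent' K f
  have := Finite.of_injective b hb
  have := Fintype.ofFinite κ
  rw [← hspan, finrank_span_eq_card hli] at ht
  obtain ⟨e⟩ : Nonempty (Fin t ↪ κ) :=
    Function.Embedding.nonempty_of_card_le (by rwa [Fintype.card_fin])
  exact ⟨b ∘ e, hli.comp e e.injective⟩

lemma finrank_span_range_eq_of_forall_eq_zero {K V ι : Type*} [Field K] [AddCommGroup V]
    [Module K V] [FiniteDimensional K V] {ℓ : ι → Dual K V}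
    (hsep : ∀ y, (∀ i, ℓ i y = 0) → y = 0) :
    finrank K (Submodule.span K (Set.range ℓ)) = finrank K V := by
  have h := Subspace.finrank_add_finrank_dualCoannihilator_eq (Submodule.span K (Set.range ℓ))
  have hbot : (Submodule.span K (Set.range ℓ)).dualCoannihilator = ⊥ :=
    (Submodule.eq_bot_iff _).mpr fun y hy => hsep y fun i =>
      (Submodule.mem_dualCoannihilator y).mp hy _ (Submodule.subset_span ⟨i, rfl⟩)
  rwa [hbot, finrank_bot, add_zero] at h

lemma posPart_add_add_posPart_sub {a b : ℝ} (h : |b| < |a|) : (a + b)⁺ + (a - b)⁺ = 2 * a⁺ := by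
  rcases le_or_gt 0 a with ha | ha
  · rw [abs_of_nonneg ha, abs_lt] at h
    rw [posPart_eq_self.2 (by linarith), posPart_eq_self.2 (by linarith), posPart_eq_self.2 ha]
    ring
  · rw [abs_of_neg ha, abs_lt] at h
    rw [posPart_eq_zero.2 (by linarith), posPart_eq_zero.2 (by linarith), posPart_eq_zero.2 ha.le]
    ring

lemma exists_pos_forall_abs_mul_lt {ι : Type*} {J : Finset ι} {a : ι → ℝ} (b : ι → ℝ)
    (ha : ∀ i ∈ J, a i ≠ 0) : ∃ ε > 0, ∀ i ∈ J, |ε * b i| < |a i| := by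
  have hsmall : ∀ᶠ ε in 𝓝 (0 : ℝ), ∀ i ∈ J, |ε * b i| < |a i| := by
    refine (Filter.eventually_all_finset J).mpr fun i hi => ?_
    have : Filter.Tendsto (fun ε : ℝ => |ε * b i|) (𝓝 0) (𝓝 0) := by
      simpa using ((continuous_id.mul continuous_const).abs).tendsto (0 : ℝ)
    exact this.eventually (gt_mem_nhds (abs_pos.mpr (ha i hi)))
  obtain ⟨ε, hε, hεpos⟩ :=
    ((hsmall.filter_mono nhdsWithin_le_nhds).and (self_mem_nhdsWithin (s := Set.Ioi 0))).exists
  exact ⟨ε, hεpos, hε⟩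

section Classes

variable {V ι E : Type*} [AddCommGroup V] [Module ℝ V] [AddCommGroup E] [Module ℝ E]
  {ℓ : ι → Dual ℝ V} {v : ι → E}

open Classical in
/-- When `φ x₀ = 1`, this is supported on the coordinates `i` whose functional `ℓ i` is
proportional to `φ`, with weight the absolute value of the factor `ℓ i x₀`. -/
noncomputable def classWeight (ℓ : ι → Dual ℝ V) (φ : Dual ℝ V) (x₀ : V) (i : ι) : ℝ :=
  if ℓ i = ℓ i x₀ • φ then |ℓ i x₀| else 0

lemma classWeight_ne_zero_iff {φ : Dual ℝ V} {x₀ : V} {i : ι} :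
    classWeight ℓ φ x₀ i ≠ 0 ↔ ℓ i = ℓ i x₀ • φ ∧ ℓ i x₀ ≠ 0 := by
  by_cases h : ℓ i = ℓ i x₀ • φ
  · rw [classWeight, if_pos h, abs_ne_zero]
    exact ⟨fun hc => ⟨h, hc⟩, And.right⟩
  · simp [classWeight, h]

lemma eq_apply_smul_of_ker_le {φ ψ : Dual ℝ V} {x₀ : V} (hφ : φ x₀ = 1)
    (h : LinearMap.ker φ ≤ LinearMap.ker ψ) : ψ = ψ x₀ • φ := by
  ext z
  have := LinearMap.mem_ker.mp (h (show z - φ z • x₀ ∈ LinearMap.ker φ by simp [hφ]))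
  simp only [map_sub, map_smul, smul_eq_mul, sub_eq_zero] at this
  simp [this, mul_comm]

variable [Fintype ι]

lemma sum_classWeight_smul_eq_zero (hF : ∀ y, ∑ i, (ℓ i y)⁺ • v i = 0) {φ : Dual ℝ V} {x₀ : V}
    (hφ : φ x₀ = 1) : ∑ i, classWeight ℓ φ x₀ i • v i = 0 := by
  classical
  -- At a point `y` of the hyperplane `ker φ` off the kernels of the other coordinates, the
  -- second difference of `y ↦ ∑ (ℓ i y)⁺ • v i` in direction `x₀` sees only the class of `φ`.
  obtain ⟨y, hyφ, hy⟩ : ∃ y ∈ LinearMap.ker φ, ∀ i : {i // ℓ i ≠ ℓ i x₀ • φ}, ℓ i y ≠ 0 := by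
    refine Dual.exists_forall_mem_ne_zero_of_forall_exists _ _ fun i => ?_
    by_contra! h
    exact i.2 (eq_apply_smul_of_ker_le hφ fun y hy => h y hy)
  obtain ⟨ε, hε, hsmall⟩ := exists_pos_forall_abs_mul_lt (J := {i | ℓ i ≠ ℓ i x₀ • φ})
    (a := fun i => ℓ i y) (fun i => ℓ i x₀) fun i hi => hy ⟨i, (mem_filter.mp hi).2⟩
  have hsecond (i : ι) : (ℓ i (y + ε • x₀))⁺ + (ℓ i (y - ε • x₀))⁺ - 2 * (ℓ i y)⁺ =
      ε * classWeight ℓ φ x₀ i := by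
    by_cases hi : ℓ i = ℓ i x₀ • φ
    · rw [classWeight, if_pos hi]
      set c := ℓ i x₀
      have hℓ (z : V) : ℓ i z = c * φ z := LinearMap.congr_fun hi z
      simp only [hℓ, map_add, map_sub, map_smul, smul_eq_mul, LinearMap.mem_ker.mp hyφ, hφ]
      simp [posPart_add_negPart, abs_mul, abs_of_pos hε, mul_comm]
    · simp only [classWeight, if_neg hi, map_add, map_sub, map_smul, smul_eq_mul, mul_zero]
      rw [posPart_add_add_posPart_sub (hsmall i (by simpa using hi)), sub_self]
  have : ∑ i, (ε * classWeight ℓ φ x₀ i) • v i = 0 := by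
    simp only [← hsecond, sub_smul, add_smul, sum_sub_distrib, sum_add_distrib, mul_smul,
      ← smul_sum, hF, smul_zero, sub_zero, add_zero]
  simp only [mul_smul, ← smul_sum] at this
  exact (smul_eq_zero.mp this).resolve_left hε.ne'

lemma isTverbergWeights_classWeight {κ : Type*} (hF : ∀ y, ∑ i, (ℓ i y)⁺ • v i = 0)
    {a : κ → ι} (hli : LinearIndependent ℝ (ℓ ∘ a)) {x₀ : κ → V}
    (hx₀ : ∀ j, ℓ (a j) (x₀ j) = 1) :
    IsTverbergWeights v fun j => classWeight ℓ (ℓ (a j)) (x₀ j) where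
  nonneg j i := by unfold classWeight; split_ifs <;> simp
  sum_smul_eq_zero j := sum_classWeight_smul_eq_zero hF (hx₀ j)
  ne_zero j h := classWeight_ne_zero_iff.mpr (by simp [hx₀]) (congrFun h (a j))
  disjoint j j' hne i := by
    by_contra! h
    obtain ⟨hj, hc⟩ := classWeight_ne_zero_iff.mp h.1
    obtain ⟨hj', -⟩ := classWeight_ne_zero_iff.mp h.2
    refine hc ((LinearIndepOn.pair_iff _ hne).mp (hli.linearIndepOn _) (ℓ i (x₀ j))
      (-ℓ i (x₀ j')) ?_).1
    simp [← hj, ← hj']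

theorem exists_isTverbergWeights_of_sum_posPart_smul_eq_zero [FiniteDimensional ℝ V] {t : ℕ}
    (hsum : ∀ y, ∑ i, ℓ i y = 0) (hsep : ∀ y, (∀ i, ℓ i y = 0) → y = 0)
    (hF : ∀ y, ∑ i, (ℓ i y)⁺ • v i = 0)
    (ht : t < finrank ℝ V) : ∃ w : Fin 2 ⊕ Fin t → ι → ℝ, IsTverbergWeights v w := by
  obtain ⟨a, hli⟩ := exists_linearIndependent_comp_of_le_finrank ℓ
    ((finrank_span_range_eq_of_forall_eq_zero hsep).symm ▸ ht.le)
  choose x₀ hx₀ using fun j => LinearMap.surjective (hli.ne_zero j) 1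
  obtain ⟨μ, hμ, hμ0⟩ := Submodule.exists_mem_ne_zero_of_ne_bot
    (LinearMap.ker_ne_bot_of_finrank_lt (f := LinearMap.pi fun j => ℓ (a j)) (by simpa using ht))
  have hvanish (j : Fin t) : ℓ (a j) μ = 0 := congrFun (LinearMap.mem_ker.mp hμ) j
  have hm0 : (fun i => ℓ i μ) ≠ 0 := fun h => hμ0 (hsep μ (congrFun h))
  refine ⟨_, (isTverbergWeights_posPart_negPart hm0 (hsum μ) (hF μ) ?_).sum_elim
    (isTverbergWeights_classWeight hF hli hx₀) fun j j' i => ?_⟩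
  · simpa [posPart_neg] using hF (-μ)
  · by_cases hi : classWeight ℓ (ℓ (a j')) (x₀ j') i = 0
    · exact .inr hi
    · have hℓ := (classWeight_ne_zero_iff.mp hi).1
      have : ℓ i μ = 0 := by rw [hℓ, LinearMap.smul_apply, hvanish, smul_zero]
      left
      fin_cases j <;> simp [this]

end Classes

theorem tverberg_partition_from_zero_dim_radon_general
    (d t : ℕ) (S : Finset (Fin d → ℝ))
    (hcard : S.card = d + t + 2) (hdim : CovDimLE ↥(TverSet 2 S) 0) :
    (TverSet (2 + t) S).Nonempty := by
  have hD : t + 1 ≤ finrank ℝ (affineDependencies ((↑) : S → Fin d → ℝ)) := by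
    have := card_le_finrank_add_finrank_affineDependencies ((↑) : S → Fin d → ℝ)
    simp only [Fintype.card_coe, hcard, finrank_fin_fun] at this
    omega
  obtain ⟨μ, hμ, hμ0⟩ := Submodule.exists_mem_ne_zero_of_ne_bot
    (Submodule.one_le_finrank_iff.mp ((Nat.le_add_left 1 t).trans hD))
  rcases t with _ | t
  · exact ⟨_, radonPoint_mem_tverSet_two hμ hμ0⟩
  have hF (ν : affineDependencies ((↑) : S → Fin d → ℝ)) :
      ∑ i, (ν.1 i)⁺ • ((i : Fin d → ℝ) - radonPoint ((↑) : S → Fin d → ℝ) μ) = 0 := by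
    by_cases hν : ν = 0
    · simp [hν]
    have hν0 : (ν : S → ℝ) ≠ 0 := by simpa using hν
    rw [radonPoint_eq_of_covDimLE hdim (by omega) hμ hμ0 ν.2 hν0]
    exact sum_posPart_smul_sub_radonPoint
      (sum_posPart_pos hν0 (mem_affineDependencies.mp ν.2).2).ne'
  obtain ⟨w, hw⟩ := exists_isTverbergWeights_of_sum_posPart_smul_eq_zero
    (ℓ := fun i => (LinearMap.proj i).comp (Submodule.subtype _))
    (fun ν => (mem_affineDependencies.mp ν.2).2) (fun ν hν => Subtype.ext (funext hν)) hF
    (t := t + 1) (by omega)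
  exact ⟨_, mem_tverSet_of_isTverbergWeights (by omega) (hw.comp finSumFinEquiv.symm.injective)⟩

theorem tverberg_partition_from_zero_dim_radon
    (d t : ℕ) (hd : 0 < d) (S : Finset (Fin d → ℝ))
    (hcard : S.card = d + t + 2) (hdim : CovDimLE ↥(TverSet 2 S) 0) :
    (TverSet (2 + t) S).Nonempty :=
  tverberg_partition_from_zero_dim_radon_general d t S hcard hdim
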